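/- If the accessible region R is closed, then for each i = 1, ..., k the combinatorial identity ∑_{y ∈ B} k_i*(y) · p_1^{y_1} ··· p_k^{y_k} = p_i holds. -/

import Mathlib

/-!
Let `f a = ∑_{y ∈ B} k(a, y) p^y` be the total weight of the exits reached from `a`.
Splitting every path at its first step gives `f 0 = ∑ᵢ f eᵢ`. Splitting at each step again,
a point of `R` passes its weight `p^a` on to its successors with total `p^a ∑ᵢ pᵢ = p^a`, so by
induction on the distance to any finite set of exits `f a ≤ p^a`; in particular `f eᵢ ≤ pᵢ`.
Since `∑ᵢ f eᵢ = f 0 = 1 = ∑ᵢ pᵢ`, each of these inequalities is an equality.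
-/

open scoped Classical

/-- Number of lattice paths from `a` to `x`, each step adding one standard
basis vector, all of whose points (including the endpoints) lie in `A`. -/
noncomputable def pathCount {k : ℕ} (A : Set (Fin k → ℕ)) (a : Fin k → ℕ)
    (x : Fin k → ℕ) : ℕ :=
  if x = a then (if a ∈ A then 1 else 0)
  else if x ∈ A then
    ∑ i : Fin k, if h : 0 < x i then pathCount A a (Function.update x i (x i - 1)) else 0
  else 0
termination_by ∑ i, x i
decreasing_by
  have h1 := Finset.sum_update_of_mem (Finset.mem_univ i) x (x i - 1)
  have h2 := Finset.sum_eq_sum_sdiff_singleton_add (Finset.mem_univ i) x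
  omega

/-- The boundary `B` of a region `R ⊆ ℕᵏ`: the points not in `R` that can be
reached in one step (addition of one standard basis vector) from a point of `R`. -/
def bdry {k : ℕ} (R : Set (Fin k → ℕ)) : Set (Fin k → ℕ) :=
  {y | y ∉ R ∧ ∃ x ∈ R, ∃ i : Fin k, y = x + Pi.single i 1}

/-- Number of lattice paths from `a` to `y` all of whose points except `y`
lie in `R`. -/
noncomputable def exitCount {k : ℕ} (R : Set (Fin k → ℕ)) (a y : Fin k → ℕ) : ℕ :=
  pathCount (insert y R) a y

/-- `R ⊆ ℕᵏ` is *simple* if for every `n` the convex hull (in `ℝᵏ`) of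
`Rₙ = R ∩ Sₙ` contains no point of `Sₙ = {x ∈ ℕᵏ : ∑ xᵢ = n}` outside `Rₙ`. -/
def IsSimple {k : ℕ} (R : Set (Fin k → ℕ)) : Prop :=
  ∀ n : ℕ, ∀ x : Fin k → ℕ, ∑ i, x i = n →
    (fun i => (x i : ℝ)) ∈ convexHull ℝ
      ((fun (z : Fin k → ℕ) (i : Fin k) => (z i : ℝ)) ''
        {z : Fin k → ℕ | z ∈ R ∧ ∑ i, z i = n}) →
    x ∈ R

section

variable {k : ℕ}

lemma sum_add_single (x : Fin k → ℕ) (i : Fin k) :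
    ∑ j, (x + Pi.single i 1 : Fin k → ℕ) j = ∑ j, x j + 1 := by
  simp [Finset.sum_add_distrib]

lemma not_add_single_le (a : Fin k → ℕ) (i : Fin k) : ¬ a + Pi.single i 1 ≤ a :=
  fun h => by simpa using h i

lemma update_sub_one_eq_iff {a x : Fin k → ℕ} {j : Fin k} (hj : 0 < x j) :
    Function.update x j (x j - 1) = a ↔ x = a + Pi.single j 1 := by
  constructor
  · rintro rfl
    ext i
    rcases eq_or_ne i j with rfl | hij <;> simp [*]
    omega
  · rintro rfl
    ext i
    rcases eq_or_ne i j with rfl | hij <;> simp [*]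

section PathCount

variable {A : Set (Fin k → ℕ)} {a x : Fin k → ℕ}

lemma pathCount_self : pathCount A a a = if a ∈ A then 1 else 0 := by
  rw [pathCount, if_pos rfl]

lemma pathCount_of_notMem_right (hx : x ∉ A) : pathCount A a x = 0 := by
  rw [pathCount]
  split_ifs with hxa
  · exact absurd (hxa ▸ ‹a ∈ A›) hx
  · rfl
  · rfl

lemma pathCount_of_notMem_left (ha : a ∉ A) : pathCount A a x = 0 := by
  fun_induction pathCount A a x with
  | case1 => contradiction
  | case2 => rfl
  | case3 x _ _ ih => exact Finset.sum_eq_zero fun j _ => by split <;> simp_all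
  | case4 => rfl

lemma pathCount_eq_zero_of_not_le (hax : ¬ a ≤ x) : pathCount A a x = 0 := by
  fun_induction pathCount A a x with
  | case1 | case2 => exact absurd le_rfl hax
  | case3 x _ _ ih =>
    refine Finset.sum_eq_zero fun j _ => ?_
    split
    · next hj => exact ih j hj fun h => hax (h.trans (update_le_self_iff.2 (Nat.sub_le _ _)))
    · rfl
  | case4 => rfl

lemma pathCount_of_mem (hx : x ∈ A) :
    pathCount A a x = (if x = a then 1 else 0) +
      ∑ j, if 0 < x j then pathCount A a (Function.update x j (x j - 1)) else 0 := by
  by_cases hxa : x = a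
  · subst hxa
    rw [pathCount_self, if_pos hx, if_pos rfl, left_eq_add]
    refine Finset.sum_eq_zero fun j _ => ?_
    split_ifs with hj
    · exact pathCount_eq_zero_of_not_le fun h =>
        (update_lt_self_iff.2 (Nat.sub_lt hj one_pos)).not_ge h
    · rfl
  · rw [pathCount, if_neg hxa, if_pos hx, if_neg hxa, zero_add]
    rfl

lemma pathCount_eq_ite_add_sum (ha : a ∈ A) (x : Fin k → ℕ) :
    pathCount A a x = (if x = a then 1 else 0) + ∑ i, pathCount A (a + Pi.single i 1) x := by
  fun_induction pathCount A a x with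
  | case1 => simp [pathCount_eq_zero_of_not_le (not_add_single_le _ _)]
  | case2 => contradiction
  | case3 x hxa hx ih =>
    have one_step : ∀ j, (if 0 < x j then
        (if Function.update x j (x j - 1) = a then 1 else 0) else 0) =
          if x = a + Pi.single j 1 then 1 else 0 := by
      intro j
      by_cases hj : 0 < x j
      · simp only [if_pos hj, update_sub_one_eq_iff hj]
      · rw [if_neg hj, if_neg]
        rintro rfl
        simp at hj
    calc (∑ j, if h : 0 < x j then pathCount A a (Function.update x j (x j - 1)) else 0)
        = ∑ j, ((if 0 < x j then (if Function.update x j (x j - 1) = a then 1 else 0) else 0) +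
            ∑ i, if 0 < x j then
              pathCount A (a + Pi.single i 1) (Function.update x j (x j - 1)) else 0) := by
          refine Finset.sum_congr rfl fun j _ => ?_
          by_cases hj : 0 < x j
          · simp only [dif_pos hj, if_pos hj, ih j hj]
          · simp only [dif_neg hj, if_neg hj, Finset.sum_const_zero, add_zero]
      _ = (if x = a then 1 else 0) + ∑ i, pathCount A (a + Pi.single i 1) x := by
          rw [Finset.sum_add_distrib, Finset.sum_comm]
          simp only [one_step, pathCount_of_mem hx, if_neg hxa, zero_add,
            Finset.sum_add_distrib]
  | case4 x hxa hx => simp [pathCount_of_notMem_right hx, hxa]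

end PathCount

section ExitCount

variable {R : Set (Fin k → ℕ)} {a y : Fin k → ℕ}

lemma exitCount_eq_sum_exitCount_add_single (ha : a ∈ R) (hy : y ∉ R) :
    exitCount R a y = ∑ i, exitCount R (a + Pi.single i 1) y := by
  rw [exitCount, pathCount_eq_ite_add_sum (Set.mem_insert_of_mem y ha),
    if_neg (by rintro rfl; exact hy ha), zero_add]
  rfl

lemma exitCount_of_notMem (ha : a ∉ R) : exitCount R a y = if y = a then 1 else 0 := by
  split_ifs with hya
  · rw [hya, exitCount, pathCount_self, if_pos (Set.mem_insert a R)]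
  · exact pathCount_of_notMem_left (by simp [Ne.symm hya, ha])

lemma exitCount_eq_zero_of_not_le (hay : ¬ a ≤ y) : exitCount R a y = 0 :=
  pathCount_eq_zero_of_not_le hay

end ExitCount

noncomputable def weight (p : Fin k → ℝ) (x : Fin k → ℕ) : ℝ :=
  ∏ j, p j ^ x j

/-- `exitMass R p a` is `∑_{y ∈ B} k(a, y) p^y`; for `a = 0` it is the closedness sum and for
`a = eᵢ` the sum `∑_{y ∈ B} kᵢ*(y) p^y`. -/
noncomputable def exitMass (R : Set (Fin k → ℕ)) (p : Fin k → ℝ) (a : Fin k → ℕ) : ℝ :=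
  ∑' y : bdry R, (exitCount R a y : ℝ) * weight p y

section Weight

variable {p : Fin k → ℝ}

lemma weight_nonneg (hp : ∀ i, 0 ≤ p i) (x : Fin k → ℕ) : 0 ≤ weight p x :=
  Finset.prod_nonneg fun j _ => pow_nonneg (hp j) _

lemma weight_single (i : Fin k) : weight p (Pi.single i 1) = p i := by
  simp [weight, Pi.single_apply, pow_ite]

lemma weight_add_single (x : Fin k → ℕ) (i : Fin k) :
    weight p (x + Pi.single i 1) = weight p x * p i := by
  rw [← weight_single (p := p) i]
  simp only [weight, Pi.add_apply, pow_add, Finset.prod_mul_distrib]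

end Weight

section ExitMass

variable {R : Set (Fin k → ℕ)} {p : Fin k → ℝ}

lemma sum_exitCount_mul_weight_le (hp : ∀ i, 0 ≤ p i) (hsum : ∑ i, p i ≤ 1)
    (s : Finset (Fin k → ℕ)) (hs : ∀ y ∈ s, y ∉ R) (a : Fin k → ℕ) :
    ∑ y ∈ s, (exitCount R a y : ℝ) * weight p y ≤ weight p a := by
  -- induction on the number `m` of levels by which `s` can still lie above `a`
  obtain ⟨m, hm⟩ : ∃ m, ∀ y ∈ s, ∑ j, y j < ∑ j, a j + m :=
    ⟨s.sup (fun y => ∑ j, y j) + 1, fun y hy => by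
      have := Finset.le_sup (f := fun y : Fin k → ℕ => ∑ j, y j) hy
      omega⟩
  induction m generalizing a with
  | zero =>
    refine le_of_eq_of_le (Finset.sum_eq_zero fun y hy => ?_) (weight_nonneg hp a)
    have hay : ¬ a ≤ y := fun hay => by
      have := Finset.sum_le_sum (s := Finset.univ) fun j _ => hay j
      have := hm y hy
      omega
    rw [exitCount_eq_zero_of_not_le hay, Nat.cast_zero, zero_mul]
  | succ m ih =>
    by_cases ha : a ∈ R
    · calc ∑ y ∈ s, (exitCount R a y : ℝ) * weight p y
          = ∑ i, ∑ y ∈ s, (exitCount R (a + Pi.single i 1) y : ℝ) * weight p y := by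
            rw [Finset.sum_comm]
            refine Finset.sum_congr rfl fun y hy => ?_
            rw [exitCount_eq_sum_exitCount_add_single ha (hs y hy), Nat.cast_sum, Finset.sum_mul]
        _ ≤ ∑ i, weight p (a + Pi.single i 1) :=
            Finset.sum_le_sum fun i _ => ih (a + Pi.single i 1) fun y hy => by
              rw [sum_add_single]
              exact (hm y hy).trans_eq (by ring)
        _ ≤ weight p a := by
            simp only [weight_add_single, ← Finset.mul_sum]
            exact mul_le_of_le_one_right (weight_nonneg hp a) hsum
    · simp only [exitCount_of_notMem ha, Nat.cast_ite, Nat.cast_one, Nat.cast_zero, ite_mul,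
        one_mul, zero_mul, Finset.sum_ite_eq']
      split_ifs
      exacts [le_rfl, weight_nonneg hp a]

lemma sum_bdry_exitCount_mul_weight_le (hp : ∀ i, 0 ≤ p i) (hsum : ∑ i, p i ≤ 1)
    (a : Fin k → ℕ) (s : Finset (bdry R)) :
    ∑ y ∈ s, (exitCount R a y : ℝ) * weight p y ≤ weight p a := by
  have h := sum_exitCount_mul_weight_le hp hsum (s.map (Function.Embedding.subtype _))
    (by simpa using fun y hy _ => hy.1) a
  rwa [Finset.sum_map] at h

lemma summable_exitCount_mul_weight (hp : ∀ i, 0 ≤ p i) (hsum : ∑ i, p i ≤ 1)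
    (a : Fin k → ℕ) : Summable fun y : bdry R => (exitCount R a y : ℝ) * weight p y :=
  summable_of_sum_le (fun y => mul_nonneg (Nat.cast_nonneg _) (weight_nonneg hp y))
    (sum_bdry_exitCount_mul_weight_le hp hsum a)

lemma exitMass_le_weight (hp : ∀ i, 0 ≤ p i) (hsum : ∑ i, p i ≤ 1) (a : Fin k → ℕ) :
    exitMass R p a ≤ weight p a :=
  (summable_exitCount_mul_weight hp hsum a).tsum_le_of_sum_le
    (sum_bdry_exitCount_mul_weight_le hp hsum a)

lemma exitMass_zero_eq_sum (hp : ∀ i, 0 ≤ p i) (hsum : ∑ i, p i ≤ 1) (h0 : 0 ∈ R) :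
    exitMass R p 0 = ∑ i, exitMass R p (Pi.single i 1) := by
  unfold exitMass
  rw [← Summable.tsum_finsetSum fun i _ => summable_exitCount_mul_weight hp hsum _]
  refine tsum_congr fun y => ?_
  rw [exitCount_eq_sum_exitCount_add_single h0 y.2.1, Nat.cast_sum, Finset.sum_mul]
  simp only [zero_add]

end ExitMass

end

/-- If the accessible region `R` is closed, then for each `i`
the combinatorial identity `∑_{y ∈ B} kᵢ*(y) · p₁^{y₁} ⋯ p_k^{y_k} = pᵢ` holds. -/
theorem unbiased_identity {k : ℕ} (p : Fin k → ℝ) (hp : ∀ i, 0 < p i)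
    (hsum : ∑ i, p i = 1) (R : Set (Fin k → ℕ)) (h0 : (0 : Fin k → ℕ) ∈ R)
    (hclosed : ∑' y : bdry R,
      (exitCount R 0 (y : Fin k → ℕ) : ℝ) * ∏ j, p j ^ (y : Fin k → ℕ) j = 1)
    (i : Fin k) :
    ∑' y : bdry R,
        (exitCount R (Pi.single i 1) (y : Fin k → ℕ) : ℝ) *
          ∏ j, p j ^ (y : Fin k → ℕ) j
      = p i := by
  show exitMass R p (Pi.single i 1) = p i
  have hp' : ∀ j, 0 ≤ p j := fun j => (hp j).le
  have hle : ∀ j ∈ Finset.univ, exitMass R p (Pi.single j 1) ≤ p j := fun j _ =>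
    weight_single (p := p) j ▸ exitMass_le_weight hp' hsum.le _
  have htotal : ∑ j, exitMass R p (Pi.single j 1) = ∑ j, p j := by
    rw [← exitMass_zero_eq_sum hp' hsum.le h0, hsum]
    exact hclosed
  exact (Finset.sum_eq_sum_iff_of_le hle).1 htotal i (Finset.mem_univ i)
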